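/- arXiv:math/0209099 — 2 statements merged into one kernel-verified Lean document; each statement's English description precedes it below -/
import Mathlib

section
/- For a closed (p+1)-form α on a smooth manifold M, the bundle automorphism A of T ⊕ ΛᵖT* given by A(X+ξ) = X + ξ + ι(X)α preserves the Courant bracket: A([X+ξ, Y+η]) = [A(X+ξ), A(Y+η)]. -/
/-!
STATEMENT 2: For a closed (p+1)-form `α` on a smooth manifold `M`, the bundle
automorphism `A` of `T ⊕ ΛᵖT*` given by `A(X+ξ) = X + ξ + ι(X)α` preserves the
Courant bracket `[X+ξ, Y+η] = [X,Y] + L_X η - L_Y ξ - ½ d(ι(X)η - ι(Y)ξ)`.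

This is formalized in an axiomatic Cartan calculus: `Vec` is the Lie algebra of
vector fields, `Ω` the space of differential forms, `d` the exterior derivative,
`iota X` the interior product; the Lie derivative is `L_X = d ∘ ι(X) + ι(X) ∘ d`
(Cartan's formula), and the standard identities `ι([X,Y]) = [L_X, ι(Y)]` and
`ι(X)ι(Y) = -ι(Y)ι(X)` are assumed.
-/

/-- The Lie derivative, via Cartan's magic formula. -/
def lieDeriv {Vec Ω : Type*} [AddCommGroup Ω] [Module ℝ Ω]
    (d : Ω →ₗ[ℝ] Ω) (iota : Vec → Ω →ₗ[ℝ] Ω) (X : Vec) (ω : Ω) : Ω :=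
  d (iota X ω) + iota X (d ω)

/-- The Courant bracket on sections of `T ⊕ ΛᵖT*`:
`[X+ξ, Y+η] = [X,Y] + L_X η - L_Y ξ - ½ d(ι(X)η - ι(Y)ξ)`. -/
noncomputable def courantBracket {Vec Ω : Type*} [LieRing Vec] [AddCommGroup Ω] [Module ℝ Ω]
    (d : Ω →ₗ[ℝ] Ω) (iota : Vec → Ω →ₗ[ℝ] Ω) (u v : Vec × Ω) : Vec × Ω :=
  (⁅u.1, v.1⁆,
    lieDeriv d iota u.1 v.2 - lieDeriv d iota v.1 u.2
      - (1 / 2 : ℝ) • d (iota u.1 v.2 - iota v.1 u.2))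

theorem closed_form_gives_courant_automorphism
    {Vec Ω : Type*} [LieRing Vec] [AddCommGroup Ω] [Module ℝ Ω]
    (d : Ω →ₗ[ℝ] Ω) (iota : Vec → Ω →ₗ[ℝ] Ω)
    (hd2 : ∀ ω, d (d ω) = 0)
    (hnat : ∀ X Y ω, iota ⁅X, Y⁆ ω
      = lieDeriv d iota X (iota Y ω) - iota Y (lieDeriv d iota X ω))
    (hanti : ∀ X Y ω, iota X (iota Y ω) = -iota Y (iota X ω))
    -- a closed form `α`
    (α : Ω) (hα : d α = 0) :
    -- the automorphism `A(X+ξ) = X + ξ + ι(X)α` preserves the Courant bracket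
    ∀ u v : Vec × Ω,
      courantBracket d iota (u.1, u.2 + iota u.1 α) (v.1, v.2 + iota v.1 α)
        = ((courantBracket d iota u v).1,
           (courantBracket d iota u v).2 + iota (courantBracket d iota u v).1 α) := by
  rintro ⟨X, ξ⟩ ⟨Y, η⟩
  simp only [courantBracket, lieDeriv, Prod.mk.injEq, map_add, map_sub, hα, map_zero, add_zero]
  refine ⟨trivial, ?_⟩
  have h1 := hnat X Y α
  simp only [lieDeriv, hα, map_zero, add_zero] at h1
  rw [h1, hanti Y X α]
  simp only [map_neg, map_sub, map_add]
  module
end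

section
/- For B ∈ Λ²V*, the wedge action φ ↦ exp(B) ∧ φ preserves the spinor bilinear form: ⟨exp(B)∧φ, exp(B)∧ψ⟩ = ⟨φ, ψ⟩ for all φ, ψ ∈ Λᵉᵛ V* (similarly for odd forms). -/
set_option synthInstance.maxHeartbeats 1000000
set_option maxHeartbeats 1000000

/-!
STATEMENT 10: For `B ∈ Λ²V*`, the wedge action `φ ↦ exp(B) ∧ φ` preserves the spinor
bilinear form: `⟨exp(B)∧φ, exp(B)∧ψ⟩ = ⟨φ, ψ⟩` for all `φ, ψ`.
(Here `W` plays the role of `V*`.)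
-/

open ExteriorAlgebra DirectSum

variable {W : Type*} [AddCommGroup W] [Module ℝ W]

/-- The involution `σ(φ₂ₘ) = (-1)ᵐ φ₂ₘ`, `σ(φ₂ₘ₊₁) = (-1)ᵐ φ₂ₘ₊₁`. -/
noncomputable def sigmaForm (x : ExteriorAlgebra ℝ W) : ExteriorAlgebra ℝ W :=
  DirectSum.toAddMonoid
    (fun k : ℕ => (((-1 : ℝ) ^ (k / 2) • (⋀[ℝ]^k W).subtype).toAddMonoidHom))
    (DirectSum.decompose (fun i : ℕ => ⋀[ℝ]^i W) x)

/-- Projection onto the degree-`n` graded component of the exterior algebra. -/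
noncomputable def gradePiece (n : ℕ) (x : ExteriorAlgebra ℝ W) : ExteriorAlgebra ℝ W :=
  (DirectSum.decompose (fun i : ℕ => ⋀[ℝ]^i W) x n : ExteriorAlgebra ℝ W)

/-- The spinor pairing `⟨φ,ψ⟩ = (σφ ∧ ψ)ₙ`. -/
noncomputable def spinorPairing (n : ℕ) (φ ψ : ExteriorAlgebra ℝ W) :
    ExteriorAlgebra ℝ W :=
  gradePiece n (sigmaForm φ * ψ)

/-- The exponential `exp B = Σ Bᵏ/k!` (a finite sum). -/
noncomputable def expWedge [FiniteDimensional ℝ W] (B : ExteriorAlgebra ℝ W) :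
    ExteriorAlgebra ℝ W :=
  ∑ k ∈ Finset.range (Module.finrank ℝ W + 1), (k.factorial : ℝ)⁻¹ • B ^ k

/-!
On the exterior algebra, `σ` is the reversal anti-automorphism `a₁ ∧ ⋯ ∧ aₖ ↦ aₖ ∧ ⋯ ∧ a₁`,
since reversing `k` anticommuting factors costs the sign `(-1)^(k(k-1)/2) = (-1)^(k/2)`.
Hence `σ(exp B ∧ φ) = σφ ∧ σ(exp B)`, and `σ(Bᵏ) = (-1)ᵏ Bᵏ` gives `σ(exp B) = exp(-B)`.
As `B` is nilpotent, `exp(-B) ∧ exp B = 1`, so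
`σ(exp B ∧ φ) ∧ exp B ∧ ψ = σφ ∧ ψ` already before taking the top-degree component.
-/

open Finset CliffordAlgebra

theorem neg_one_pow_succ_div_two {R : Type*} [Monoid R] [HasDistribNeg R] (k : ℕ) :
    (-1 : R) ^ ((k + 1) / 2) = (-1) ^ (k / 2) * (-1) ^ k := by
  obtain ⟨j, rfl | rfl⟩ := Nat.even_or_odd' k
  · rw [show (2 * j + 1) / 2 = j by omega, show 2 * j / 2 = j by omega]
    simp [pow_mul]
  · rw [show (2 * j + 1 + 1) / 2 = j + 1 by omega, show (2 * j + 1) / 2 = j by omega]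
    simp [pow_succ, pow_mul]

open Nat in
theorem sum_range_inv_factorial_smul_neg_pow_mul_eq_one {𝕜 A : Type*} [Field 𝕜] [CharZero 𝕜]
    [Ring A] [Algebra 𝕜 A] {a : A} {k : ℕ} (ha : a ^ k = 0) :
    (∑ i ∈ range k, (i ! : 𝕜)⁻¹ • (-a) ^ i) * ∑ i ∈ range k, (i ! : 𝕜)⁻¹ • a ^ i = 1 := by
  let : Module ℚ A := Module.compHom A (algebraMap ℚ 𝕜)
  have sum_eq_exp (b : A) (hb : b ^ k = 0) :
      ∑ i ∈ range k, (i ! : 𝕜)⁻¹ • b ^ i = IsNilpotent.exp b := by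
    rw [IsNilpotent.exp_eq_sum hb]
    refine sum_congr rfl fun i _ => ?_
    change _ = algebraMap ℚ 𝕜 (i ! : ℚ)⁻¹ • b ^ i
    rw [map_inv₀, map_natCast]
  rw [sum_eq_exp a ha, sum_eq_exp (-a) (by rw [neg_pow, ha, mul_zero]),
    IsNilpotent.exp_neg_mul_exp_self ⟨k, ha⟩]

namespace ExteriorAlgebra

section CommRing

variable {R M : Type*} [CommRing R] [AddCommGroup M] [Module R M]

theorem mem_exteriorPower_zero {x : ExteriorAlgebra R M} :
    x ∈ ⋀[R]^0 M ↔ ∃ r : R, algebraMap R _ r = x := by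
  rw [exteriorPower, pow_zero, Submodule.mem_one]

theorem mem_exteriorPower_succ {k : ℕ} {x : ExteriorAlgebra R M} :
    x ∈ ⋀[R]^(k + 1) M ↔ x ∈ LinearMap.range (ι R) * ⋀[R]^k M := by
  rw [exteriorPower, pow_succ']

theorem mul_ι_of_mem_exteriorPower {k : ℕ} {x : ExteriorAlgebra R M} (hx : x ∈ ⋀[R]^k M)
    (v : M) : x * ι R v = (-1 : R) ^ k • (ι R v * x) := by
  induction k generalizing x with
  | zero =>
    obtain ⟨r, rfl⟩ := mem_exteriorPower_zero.mp hx
    rw [pow_zero, one_smul, Algebra.commutes]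
  | succ k ih =>
    refine Submodule.mul_induction_on (mem_exteriorPower_succ.mp hx) ?_ ?_
    · rintro _ ⟨u, rfl⟩ y hy
      have swap : ι R u * ι R v = -(ι R v * ι R u) :=
        eq_neg_of_add_eq_zero_left (ι_add_mul_swap u v)
      rw [mul_assoc, ih hy, mul_smul_comm, ← mul_assoc, swap, neg_mul, smul_neg, ← neg_smul,
        pow_succ, mul_neg_one, mul_assoc]
    · intro y z hy hz
      rw [add_mul, hy, hz, mul_add, smul_add]

theorem reverse_of_mem_exteriorPower {k : ℕ} {x : ExteriorAlgebra R M} (hx : x ∈ ⋀[R]^k M) :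
    reverse x = (-1 : R) ^ (k / 2) • x := by
  induction k generalizing x with
  | zero =>
    obtain ⟨r, rfl⟩ := mem_exteriorPower_zero.mp hx
    rw [reverse.commutes, Nat.zero_div, pow_zero, one_smul]
  | succ k ih =>
    refine Submodule.mul_induction_on (mem_exteriorPower_succ.mp hx) ?_ ?_
    · rintro _ ⟨u, rfl⟩ y hy
      rw [reverse.map_mul, reverse_ι, ih hy, smul_mul_assoc, mul_ι_of_mem_exteriorPower hy,
        smul_smul, neg_one_pow_succ_div_two]
    · intro y z hy hz
      rw [map_add, hy, hz, smul_add]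

end CommRing

theorem exteriorPower_eq_bot_of_finrank_lt {K V : Type*} [Field K] [AddCommGroup V] [Module K V]
    [FiniteDimensional K V] {k : ℕ} (hk : Module.finrank K V < k) : ⋀[K]^k V = ⊥ := by
  rw [← Submodule.finrank_eq_zero, exteriorPower.finrank_eq, Nat.choose_eq_zero_of_lt hk]

theorem pow_finrank_succ_eq_zero_of_mem_exteriorPower {K V : Type*} [Field K] [AddCommGroup V]
    [Module K V] [FiniteDimensional K V] {k : ℕ} (hk : 0 < k) {x : ExteriorAlgebra K V}
    (hx : x ∈ ⋀[K]^k V) : x ^ (Module.finrank K V + 1) = 0 := by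
  have hpow : x ^ (Module.finrank K V + 1) ∈ ⋀[K]^((Module.finrank K V + 1) • k) V :=
    SetLike.pow_mem_graded _ hx
  rwa [exteriorPower_eq_bot_of_finrank_lt (by rw [smul_eq_mul]; nlinarith),
    Submodule.mem_bot] at hpow

end ExteriorAlgebra

lemma sigmaForm_eq_reverse (x : ExteriorAlgebra ℝ W) : sigmaForm x = reverse x := by
  induction x using DirectSum.Decomposition.inductionOn (ℳ := fun i : ℕ => ⋀[ℝ]^i W) with
  | zero => simp [sigmaForm]
  | homogeneous x =>
    rw [reverse_of_mem_exteriorPower x.2, sigmaForm, DirectSum.decompose_coe,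
      DirectSum.toAddMonoid_of]
    rfl
  | add x y hx hy =>
    rw [sigmaForm, DirectSum.decompose_add, map_add, ← sigmaForm, ← sigmaForm, hx, hy, map_add]

lemma reverse_expWedge [FiniteDimensional ℝ W] {B : ExteriorAlgebra ℝ W} (hB : B ∈ ⋀[ℝ]^2 W) :
    reverse (expWedge B) = expWedge (-B) := by
  rw [expWedge, map_sum, expWedge]
  refine sum_congr rfl fun k _ => ?_
  have hBk : B ^ k ∈ ⋀[ℝ]^(k • 2) W := SetLike.pow_mem_graded k hB
  rw [map_smul, reverse_of_mem_exteriorPower hBk, smul_eq_mul, Nat.mul_div_cancel _ two_pos,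
    ← neg_one_smul ℝ B, smul_pow]

lemma expWedge_neg_mul_expWedge [FiniteDimensional ℝ W] {B : ExteriorAlgebra ℝ W}
    (hB : B ∈ ⋀[ℝ]^2 W) : expWedge (-B) * expWedge B = 1 :=
  sum_range_inv_factorial_smul_neg_pow_mul_eq_one
    (pow_finrank_succ_eq_zero_of_mem_exteriorPower two_pos hB)

theorem expWedge_preserves_spinorPairing [FiniteDimensional ℝ W]
    (B : ExteriorAlgebra ℝ W) (hB : B ∈ ⋀[ℝ]^2 W) (φ ψ : ExteriorAlgebra ℝ W) :
    spinorPairing (Module.finrank ℝ W) (expWedge B * φ) (expWedge B * ψ)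
      = spinorPairing (Module.finrank ℝ W) φ ψ := by
  unfold spinorPairing
  congr 1
  calc sigmaForm (expWedge B * φ) * (expWedge B * ψ)
      = sigmaForm φ * (expWedge (-B) * expWedge B) * ψ := by
        rw [sigmaForm_eq_reverse, reverse.map_mul, reverse_expWedge hB, ← sigmaForm_eq_reverse,
          mul_assoc, mul_assoc, mul_assoc]
    _ = sigmaForm φ * ψ := by rw [expWedge_neg_mul_expWedge hB, mul_one]
end
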